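/- arXiv:hep-ph/9606216 — 2 statements merged into one kernel-verified Lean document; each statement's English description precedes it below -/
import Mathlib

section
/- Let w : (0,∞) → ℝ be measurable with ∫₀^∞ r |w(r)| dr < ∞ and ∫₀^∞ r² |w(r)| dr < ∞. For z ∈ ℂ with Re z ≥ 0 define the vacuum functional F₀(z) = ∫_{ℝ³} (e^{−z|x|}/(4π|x|)) w(|x|) d³x (this integral converges absolutely). Then for every p ∈ ℝ³ with P = |p| > 0, the two-point functional f₂(p) = ∫_{ℝ³} e^{i p·x} w(|x|) d³x satisfies f₂(p) = (2π i / P) (F₀(iP) − F₀(−iP)). -/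
/-!
Both functionals reduce to one-dimensional radial integrals. Integrating over spherical shells,
`F₀(z) = ∫₀^∞ r e^{-zr} w(r) dr`. For `f₂`, rotate `p` onto the first axis and slice `ℝ³` by the
planes `x₀ = t`: by Archimedes' hat-box theorem, each plane with `|t| < r` meets the shell of
radius `r` in an annulus of area `2πr dr`, so
`f₂(p) = 2π ∫₀^∞ r w(r) ∫_{-r}^{r} e^{iPt} dt dr = (2π/(iP)) ∫₀^∞ r w(r) (e^{iPr} - e^{-iPr}) dr`,
which is `(2πi/P)(F₀(iP) - F₀(-iP))`.
-/

open MeasureTheory Real InnerProductSpace Set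

section
variable {E : Type*} [NormedAddCommGroup E] [NormedSpace ℝ E]

lemma integral_fun_norm_euclideanSpace_fin_three (f : ℝ → E) :
    ∫ x : EuclideanSpace ℝ (Fin 3), f ‖x‖ = (4 * π) • ∫ r in Ioi (0 : ℝ), r ^ 2 • f r := by
  rw [integral_fun_norm_addHaar volume f, finrank_euclideanSpace_fin, Measure.real,
    EuclideanSpace.volume_ball_fin_three, ENNReal.toReal_mul, ENNReal.toReal_pow,
    ENNReal.toReal_ofReal zero_le_one, ENNReal.toReal_ofReal (by positivity),
    ← Nat.cast_smul_eq_nsmul ℝ, smul_smul]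
  norm_num
  ring_nf

lemma integrable_fun_norm_euclideanSpace_fin_three_iff {f : ℝ → E} :
    Integrable (fun x : EuclideanSpace ℝ (Fin 3) => f ‖x‖) ↔
      IntegrableOn (fun r : ℝ => r ^ 2 • f r) (Ioi 0) := by
  rw [integrable_fun_norm_addHaar volume, finrank_euclideanSpace_fin]

lemma integral_fun_norm_euclideanSpace_fin_two (f : ℝ → E) :
    ∫ x : EuclideanSpace ℝ (Fin 2), f ‖x‖ = (2 * π) • ∫ r in Ioi (0 : ℝ), r • f r := by
  rw [integral_fun_norm_addHaar volume f, finrank_euclideanSpace_fin, Measure.real,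
    EuclideanSpace.volume_ball_fin_two, ENNReal.toReal_mul, ENNReal.toReal_pow,
    ENNReal.toReal_ofReal zero_le_one, ENNReal.toReal_ofReal pi_pos.le,
    ← Nat.cast_smul_eq_nsmul ℝ, smul_smul]
  norm_num

lemma image_sqrt_sq_add_sq_Ioi (t : ℝ) : (fun a => √(t ^ 2 + a ^ 2)) '' Ioi 0 = Ioi |t| := by
  ext r
  constructor
  · rintro ⟨a, ha : 0 < a, rfl⟩
    rw [mem_Ioi, ← sqrt_sq_eq_abs]
    exact sqrt_lt_sqrt (sq_nonneg t) (by nlinarith)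
  · intro (hr : |t| < r)
    have hr0 : 0 < r := (abs_nonneg t).trans_lt hr
    have ht : t ^ 2 < r ^ 2 := by rw [← sq_abs]; gcongr
    refine ⟨√(r ^ 2 - t ^ 2), sqrt_pos.2 (by linarith), ?_⟩
    simp only [sq_sqrt (by linarith : 0 ≤ r ^ 2 - t ^ 2), add_sub_cancel, sqrt_sq hr0.le]

lemma integral_Ioi_smul_comp_sqrt_sq_add_sq (g : ℝ → E) (t : ℝ) :
    ∫ a in Ioi (0 : ℝ), a • g √(t ^ 2 + a ^ 2) = ∫ r in Ioi |t|, r • g r := by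
  have hderiv : ∀ a ∈ Ioi (0 : ℝ), HasDerivWithinAt (fun a => √(t ^ 2 + a ^ 2))
      (a / √(t ^ 2 + a ^ 2)) (Ioi 0) a := by
    intro a (ha : 0 < a)
    have h := ((hasDerivAt_pow 2 a).const_add (t ^ 2)).sqrt (by positivity)
    refine h.hasDerivWithinAt.congr_deriv ?_
    field_simp
    norm_num
  have hmono : StrictMonoOn (fun a => √(t ^ 2 + a ^ 2)) (Ioi 0) :=
    fun a (ha : 0 < a) b _ hab => sqrt_lt_sqrt (by positivity) (by nlinarith)
  rw [← image_sqrt_sq_add_sq_Ioi t,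
    integral_image_eq_integral_abs_deriv_smul measurableSet_Ioi hderiv hmono.injOn]
  refine setIntegral_congr_fun measurableSet_Ioi fun a (ha : 0 < a) => ?_
  have hs : 0 < √(t ^ 2 + a ^ 2) := sqrt_pos.2 (by positivity)
  rw [abs_of_pos (by positivity), smul_smul, div_mul_cancel₀ _ hs.ne']

lemma integral_euclideanSpace_fin_two_comp_sqrt_sq_add_norm_sq (g : ℝ → E) (t : ℝ) :
    ∫ y : EuclideanSpace ℝ (Fin 2), g √(t ^ 2 + ‖y‖ ^ 2) =
      (2 * π) • ∫ r in Ioi |t|, r • g r := by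
  rw [integral_fun_norm_euclideanSpace_fin_two (fun a => g √(t ^ 2 + a ^ 2)),
    integral_Ioi_smul_comp_sqrt_sq_add_sq]

lemma integral_comp_inner_of_norm_eq {V : Type*} [NormedAddCommGroup V] [InnerProductSpace ℝ V]
    [FiniteDimensional ℝ V] [MeasurableSpace V] [BorelSpace V] {u v : V} (huv : ‖u‖ = ‖v‖)
    (f : ℝ → ℝ → E) :
    ∫ x, f ⟪v, x⟫_ℝ ‖x‖ = ∫ x, f ⟪u, x⟫_ℝ ‖x‖ := by
  set R := Submodule.reflection (ℝ ∙ (u - v))ᗮ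
  have hRu : R u = v := Submodule.reflection_sub huv
  rw [← MeasureTheory.integral_comp R]
  congr 1; ext x
  rw [← hRu, R.inner_map_map, R.norm_map]

end

def EuclideanSpace.finSuccMeasurableEquiv (n : ℕ) :
    EuclideanSpace ℝ (Fin (n + 1)) ≃ᵐ ℝ × EuclideanSpace ℝ (Fin n) :=
  (MeasurableEquiv.toLp 2 (Fin (n + 1) → ℝ)).symm.trans
    ((MeasurableEquiv.piFinSuccAbove (fun _ => ℝ) 0).trans
      ((MeasurableEquiv.refl ℝ).prodCongr (MeasurableEquiv.toLp 2 (Fin n → ℝ))))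

lemma EuclideanSpace.finSuccMeasurableEquiv_apply (n : ℕ) (x : EuclideanSpace ℝ (Fin (n + 1))) :
    finSuccMeasurableEquiv n x = (x 0, WithLp.toLp 2 fun i => x i.succ) := rfl

lemma EuclideanSpace.measurePreserving_finSuccMeasurableEquiv (n : ℕ) :
    MeasurePreserving (finSuccMeasurableEquiv n) :=
  ((MeasurePreserving.id volume).prod (PiLp.volume_preserving_toLp (Fin n))).comp
    ((volume_preserving_piFinSuccAbove (fun _ => ℝ) 0).comp (PiLp.volume_preserving_ofLp _))

lemma EuclideanSpace.norm_eq_sqrt_finSuccMeasurableEquiv {n : ℕ}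
    (x : EuclideanSpace ℝ (Fin (n + 1))) :
    ‖x‖ = √(x 0 ^ 2 + ‖(finSuccMeasurableEquiv n x).2‖ ^ 2) := by
  rw [EuclideanSpace.norm_eq, finSuccMeasurableEquiv_apply, EuclideanSpace.norm_sq_eq,
    Fin.sum_univ_succ]
  simp

lemma indicator_abs_fst_lt_snd_eq_Ioi {M : Type*} [Zero M] (f : ℝ × ℝ → M) (t r : ℝ) :
    {q : ℝ × ℝ | |q.1| < q.2}.indicator f (t, r) = (Ioi |t|).indicator (fun r => f (t, r)) r := by
  simp [indicator_apply]

lemma indicator_abs_fst_lt_snd_eq_Ioo {M : Type*} [Zero M] (f : ℝ × ℝ → M) (t r : ℝ) :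
    {q : ℝ × ℝ | |q.1| < q.2}.indicator f (t, r) =
      (Ioo (-r) r).indicator (fun t => f (t, r)) t := by
  simp [indicator_apply, abs_lt]

section Fubini
variable {φ h : ℝ → ℂ} {C : ℝ}

lemma integrable_indicator_abs_fst_lt_snd (hφ : Measurable φ) (hφC : ∀ t, ‖φ t‖ ≤ C)
    (hh : Measurable h) (hh1 : IntegrableOn (fun r => r * ‖h r‖) (Ioi 0)) :
    Integrable ({q : ℝ × ℝ | |q.1| < q.2}.indicator fun q => φ q.1 * h q.2)
      (volume.prod (volume.restrict (Ioi 0))) := by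
  have hm : Measurable ({q : ℝ × ℝ | |q.1| < q.2}.indicator fun q => φ q.1 * h q.2) :=
    (hφ.comp measurable_fst).mul (hh.comp measurable_snd) |>.indicator
      (measurableSet_lt measurable_fst.abs measurable_snd)
  refine (integrable_prod_iff' hm.aestronglyMeasurable).2 ⟨.of_forall fun r => ?_, ?_⟩
  · simp only [indicator_abs_fst_lt_snd_eq_Ioo]
    rw [integrable_indicator_iff measurableSet_Ioo]
    exact Measure.integrableOn_of_bounded (M := C * ‖h r‖) measure_Ioo_lt_top.ne
      (hφ.mul_const _).aestronglyMeasurable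
      (.of_forall fun t => by rw [norm_mul]; gcongr; exact hφC t)
  refine (hh1.const_mul (2 * C)).mono'
    hm.norm.stronglyMeasurable.integral_prod_left'.aestronglyMeasurable ?_
  filter_upwards [ae_restrict_mem measurableSet_Ioi] with r (hr : 0 < r)
  simp only [indicator_abs_fst_lt_snd_eq_Ioo, norm_indicator_eq_indicator_norm]
  rw [integral_indicator measurableSet_Ioo, Real.norm_eq_abs,
    abs_of_nonneg (setIntegral_nonneg measurableSet_Ioo fun _ _ => norm_nonneg _)]
  calc ∫ t in Ioo (-r) r, ‖φ t * h r‖ ≤ ‖∫ t in Ioo (-r) r, ‖φ t * h r‖‖ := le_norm_self _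
    _ ≤ C * ‖h r‖ * volume.real (Ioo (-r) r) :=
      norm_setIntegral_le_of_norm_le_const measure_Ioo_lt_top fun t _ => by
        rw [norm_norm, norm_mul]; gcongr; exact hφC t
    _ = 2 * C * (r * ‖h r‖) := by rw [Real.volume_real_Ioo_of_le (by linarith)]; ring

lemma integral_mul_setIntegral_Ioi_abs (hφ : Measurable φ) (hφC : ∀ t, ‖φ t‖ ≤ C)
    (hh : Measurable h) (hh1 : IntegrableOn (fun r => r * ‖h r‖) (Ioi 0)) :
    ∫ t, φ t * ∫ r in Ioi |t|, h r = ∫ r in Ioi 0, (∫ t in -r..r, φ t) * h r := by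
  calc ∫ t, φ t * ∫ r in Ioi |t|, h r
        = ∫ t, ∫ r in Ioi 0,
            {q : ℝ × ℝ | |q.1| < q.2}.indicator (fun q => φ q.1 * h q.2) (t, r) := by
        congr 1; ext t
        simp only [indicator_abs_fst_lt_snd_eq_Ioi]
        rw [setIntegral_indicator measurableSet_Ioi, Ioi_inter_Ioi,
          max_eq_right (abs_nonneg t), integral_const_mul]
    _ = ∫ r in Ioi 0, ∫ t,
            {q : ℝ × ℝ | |q.1| < q.2}.indicator (fun q => φ q.1 * h q.2) (t, r) :=
        integral_integral_swap (integrable_indicator_abs_fst_lt_snd hφ hφC hh hh1)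
    _ = ∫ r in Ioi 0, (∫ t in -r..r, φ t) * h r := by
        refine setIntegral_congr_fun measurableSet_Ioi fun r (hr : 0 < r) => ?_
        simp only [indicator_abs_fst_lt_snd_eq_Ioo]
        rw [integral_indicator measurableSet_Ioo, integral_mul_const,
          intervalIntegral.integral_of_le (by linarith), integral_Ioc_eq_integral_Ioo]

end Fubini

theorem integral_apply_zero_mul_fun_norm_euclideanSpace_fin_three {φ g : ℝ → ℂ} {C : ℝ}
    (hφ : Measurable φ) (hφC : ∀ t, ‖φ t‖ ≤ C) (hg : Measurable g)
    (hgi : Integrable fun x : EuclideanSpace ℝ (Fin 3) => g ‖x‖) :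
    ∫ x : EuclideanSpace ℝ (Fin 3), φ (x 0) * g ‖x‖ =
      (2 * π) • ∫ r in Ioi 0, (∫ t in -r..r, φ t) * (r • g r) := by
  set e := EuclideanSpace.finSuccMeasurableEquiv 2
  have he := EuclideanSpace.measurePreserving_finSuccMeasurableEquiv 2
  set G : ℝ × EuclideanSpace ℝ (Fin 2) → ℂ := fun q => φ q.1 * g √(q.1 ^ 2 + ‖q.2‖ ^ 2)
  have hGe : (fun x => φ (x 0) * g ‖x‖) = G ∘ e := by
    ext x; simp only [Function.comp_apply, G, EuclideanSpace.norm_eq_sqrt_finSuccMeasurableEquiv x]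
    rfl
  have hGi : Integrable G := by
    rw [← he.integrable_comp_emb e.measurableEmbedding, ← hGe]
    exact hgi.bdd_mul (f := fun x : EuclideanSpace ℝ (Fin 3) => φ (x 0))
      (hφ.comp (by fun_prop)).aestronglyMeasurable (.of_forall fun x => hφC _)
  have hg2 : IntegrableOn (fun r : ℝ => r * ‖r • g r‖) (Ioi 0) := by
    refine IntegrableOn.congr_fun (integrable_fun_norm_euclideanSpace_fin_three_iff.1 hgi).norm
      (fun r (hr : 0 < r) => ?_) measurableSet_Ioi
    simp only [norm_smul, Real.norm_eq_abs, abs_of_pos hr, abs_pow]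
    ring
  calc ∫ x : EuclideanSpace ℝ (Fin 3), φ (x 0) * g ‖x‖ = ∫ q, G q := by
        rw [hGe]; exact he.integral_comp' (f := e) G
    _ = ∫ t, φ t * ((2 * π) • ∫ r in Ioi |t|, r • g r) := by
        rw [Measure.volume_eq_prod, integral_prod G (by rwa [← Measure.volume_eq_prod])]
        simp only [G, integral_const_mul, integral_euclideanSpace_fin_two_comp_sqrt_sq_add_norm_sq]
    _ = (2 * π) • ∫ t, φ t * ∫ r in Ioi |t|, r • g r := by
        simp only [mul_smul_comm, integral_smul]
    _ = _ := by
        rw [integral_mul_setIntegral_Ioi_abs (h := fun r => r • g r) hφ hφC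
          (measurable_id.smul hg) hg2]

lemma integral_exp_I_mul_inner_mul_fun_norm {g : ℝ → ℂ} (hg : Measurable g)
    (hgi : Integrable fun x : EuclideanSpace ℝ (Fin 3) => g ‖x‖) (p : EuclideanSpace ℝ (Fin 3)) :
    ∫ x : EuclideanSpace ℝ (Fin 3), Complex.exp (Complex.I * ⟪p, x⟫_ℝ) * g ‖x‖ =
      (2 * π) • ∫ r in Ioi 0,
        (∫ t in -r..r, Complex.exp (Complex.I * ‖p‖ * t)) * (r • g r) := by
  have hp : ‖EuclideanSpace.single (0 : Fin 3) ‖p‖‖ = ‖p‖ := by simp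
  rw [integral_comp_inner_of_norm_eq hp (fun a b => Complex.exp (Complex.I * a) * g b)]
  convert integral_apply_zero_mul_fun_norm_euclideanSpace_fin_three
    (φ := fun t => Complex.exp (Complex.I * ‖p‖ * t)) (by fun_prop) (C := 1) (fun t => ?_) hg hgi
    using 4 with x
  · simp [EuclideanSpace.inner_single_left, mul_assoc]
  · rw [mul_assoc, ← Complex.ofReal_mul, Complex.norm_exp_I_mul_ofReal]

lemma norm_exp_neg_mul_ofReal_le_one {z : ℂ} (hz : 0 ≤ z.re) {r : ℝ} (hr : 0 ≤ r) :
    ‖Complex.exp (-(z * r))‖ ≤ 1 := by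
  rw [Complex.norm_exp, Real.exp_le_one_iff, Complex.neg_re, Complex.re_mul_ofReal, neg_nonpos]
  exact mul_nonneg hz hr

lemma integrableOn_mul_exp_neg_mul_mul {w : ℝ → ℝ} (hw : Measurable w)
    (h1 : IntegrableOn (fun r : ℝ => r * |w r|) (Ioi 0)) {z : ℂ} (hz : 0 ≤ z.re) :
    IntegrableOn (fun r : ℝ => r * Complex.exp (-(z * r)) * w r) (Ioi 0) := by
  refine h1.mono' (by fun_prop) ?_
  filter_upwards [ae_restrict_mem measurableSet_Ioi] with r (hr : 0 < r)
  rw [norm_mul, norm_mul, Complex.norm_real, Complex.norm_real, Real.norm_eq_abs,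
    Real.norm_eq_abs, abs_of_pos hr]
  gcongr
  exact mul_le_of_le_one_right hr.le (norm_exp_neg_mul_ofReal_le_one hz hr.le)

lemma integrable_exp_neg_mul_norm_div_mul_fun_norm {w : ℝ → ℝ} (hw : Measurable w)
    (h1 : IntegrableOn (fun r : ℝ => r * |w r|) (Ioi 0)) {z : ℂ} (hz : 0 ≤ z.re) :
    Integrable fun x : EuclideanSpace ℝ (Fin 3) =>
      Complex.exp (-(z * ‖x‖)) / ((4 * π * ‖x‖ : ℝ) : ℂ) * ((w ‖x‖ : ℝ) : ℂ) := by
  refine integrable_fun_norm_euclideanSpace_fin_three_iff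
    (f := fun r => Complex.exp (-(z * r)) / ((4 * π * r : ℝ) : ℂ) * ((w r : ℝ) : ℂ)) |>.2 ?_
  refine IntegrableOn.congr_fun ((integrableOn_mul_exp_neg_mul_mul hw h1 hz).div_const (4 * π))
    (fun r (hr : 0 < r) => ?_) measurableSet_Ioi
  simp only [Complex.real_smul]
  push_cast
  field_simp

lemma integral_exp_neg_mul_norm_div_mul_fun_norm (w : ℝ → ℝ) (z : ℂ) :
    ∫ x : EuclideanSpace ℝ (Fin 3),
        Complex.exp (-(z * ‖x‖)) / ((4 * π * ‖x‖ : ℝ) : ℂ) * ((w ‖x‖ : ℝ) : ℂ) =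
      ∫ r in Ioi (0 : ℝ), r * Complex.exp (-(z * r)) * w r := by
  refine (integral_fun_norm_euclideanSpace_fin_three
    (fun r => Complex.exp (-(z * r)) / ((4 * π * r : ℝ) : ℂ) * ((w r : ℝ) : ℂ))).trans ?_
  rw [← integral_smul]
  refine setIntegral_congr_fun measurableSet_Ioi fun r (hr : 0 < r) => ?_
  simp only [Complex.real_smul]
  push_cast
  field_simp

/-- Lemma 1 of the paper: the two-point functional at external momentum `p` equals
`(2πi/P)(F₀(iP) − F₀(−iP))`, where `F₀(z)` is the vacuum functional obtained by closing the
external legs with a propagator `e^{-z|x|}/(4π|x|)` and `P = |p|`. -/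
theorem two_point_from_vacuum (w : ℝ → ℝ) (hw : Measurable w)
    (h1 : IntegrableOn (fun r : ℝ => r * |w r|) (Set.Ioi 0))
    (h2 : IntegrableOn (fun r : ℝ => r ^ 2 * |w r|) (Set.Ioi 0))
    (p : EuclideanSpace ℝ (Fin 3)) (hp : p ≠ 0) :
    (∀ z : ℂ, 0 ≤ z.re →
      Integrable (fun x : EuclideanSpace ℝ (Fin 3) =>
        Complex.exp (-(z * (‖x‖ : ℂ))) / ((4 * π * ‖x‖ : ℝ) : ℂ) * ((w ‖x‖ : ℝ) : ℂ))) ∧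
    Integrable (fun x : EuclideanSpace ℝ (Fin 3) =>
      Complex.exp (Complex.I * (⟪p, x⟫_ℝ : ℂ)) * ((w ‖x‖ : ℝ) : ℂ)) ∧
    ∫ x : EuclideanSpace ℝ (Fin 3),
        Complex.exp (Complex.I * (⟪p, x⟫_ℝ : ℂ)) * ((w ‖x‖ : ℝ) : ℂ)
      = (2 * π * Complex.I / ((‖p‖ : ℝ) : ℂ)) *
        ((∫ x : EuclideanSpace ℝ (Fin 3),
            Complex.exp (-((Complex.I * (‖p‖ : ℂ)) * (‖x‖ : ℂ))) / ((4 * π * ‖x‖ : ℝ) : ℂ) *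
              ((w ‖x‖ : ℝ) : ℂ)) -
         (∫ x : EuclideanSpace ℝ (Fin 3),
            Complex.exp (-((-(Complex.I * (‖p‖ : ℂ))) * (‖x‖ : ℂ))) / ((4 * π * ‖x‖ : ℝ) : ℂ) *
              ((w ‖x‖ : ℝ) : ℂ))) := by
  have hP : (‖p‖ : ℂ) ≠ 0 := by simpa using hp
  have hwm : Measurable fun r : ℝ => ((w r : ℝ) : ℂ) := by fun_prop
  have hwi : Integrable fun x : EuclideanSpace ℝ (Fin 3) => ((w ‖x‖ : ℝ) : ℂ) := by
    refine integrable_fun_norm_euclideanSpace_fin_three_iff (f := fun r => ((w r : ℝ) : ℂ)) |>.2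
      (h2.mono' (by fun_prop) ?_)
    filter_upwards with r
    simp
  refine ⟨fun z hz => integrable_exp_neg_mul_norm_div_mul_fun_norm hw h1 hz,
    hwi.bdd_mul (c := 1) (by fun_prop) (.of_forall fun x => ?_), ?_⟩
  · exact (Complex.norm_exp_I_mul_ofReal _).le
  have hexp : ∀ r : ℝ, ∫ t in -r..r, Complex.exp (Complex.I * ‖p‖ * t) =
      (Complex.exp (Complex.I * ‖p‖ * r) - Complex.exp (-(Complex.I * ‖p‖ * r))) /
        (Complex.I * ‖p‖) := fun r => by
    rw [integral_exp_mul_complex (mul_ne_zero Complex.I_ne_zero hP)]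
    push_cast
    ring_nf
  have hI : (0 : ℝ) ≤ (Complex.I * ‖p‖).re := by simp
  have hnegI : (0 : ℝ) ≤ (-(Complex.I * ‖p‖)).re := by simp
  rw [integral_exp_I_mul_inner_mul_fun_norm hwm hwi, integral_exp_neg_mul_norm_div_mul_fun_norm,
    integral_exp_neg_mul_norm_div_mul_fun_norm,
    ← integral_sub (integrableOn_mul_exp_neg_mul_mul hw h1 hI)
      (integrableOn_mul_exp_neg_mul_mul hw h1 hnegI), ← integral_const_mul, ← integral_smul]
  refine setIntegral_congr_fun measurableSet_Ioi fun r _ => ?_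
  rw [hexp, Complex.real_smul, Complex.real_smul]
  field_simp
  rw [Complex.I_sq]
  push_cast
  ring
end

section
/- Let a > m₅ > 0, let r > 0, and let u ∈ ℝ³ be a unit vector. Then the function y ↦ e^{−m₅|r·u + y| − a|y|}/(|r·u + y| |y|²) is integrable on ℝ³ and ∫_{ℝ³} e^{−m₅|r·u+y| − a|y|}/(|r·u+y| |y|²) d³y = (2π/(m₅ r)) [ e^{−m₅ r} ∫₀^r (e^{−(a−m₅)x} − e^{−(a+m₅)x}) x^{−1} dx + (e^{m₅ r} − e^{−m₅ r}) ∫_r^∞ e^{−(a+m₅)x} x^{−1} dx ]. -/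
/-!
A reflection takes `u` to the first basis vector `e₀`; pass to cylindrical coordinates
`(z, ρ, φ)` around `e₀`, and on the half-plane `ρ > 0` use the bipolar coordinates `s = |y|`,
`t = |r u + y| = √((r + z)² + ρ²)`, for which `ρ dz dρ = (s t / r) ds dt` on the triangle
`|r - s| < t < r + s`. The integrand then becomes `e^{-a s} e^{-m₅ t} / (r s)`, the `t`-integral
is elementary, and splitting the remaining `s`-integral at `s = r` gives the two terms.
-/

open MeasureTheory Real Set
open scoped ENNReal

noncomputable section

theorem lintegral_comp_norm_norm_add_of_norm_eq {E : Type*} [NormedAddCommGroup E]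
    [InnerProductSpace ℝ E] [FiniteDimensional ℝ E] [MeasurableSpace E] [BorelSpace E]
    (F : ℝ × ℝ → ℝ≥0∞) {v w : E} (h : ‖v‖ = ‖w‖) :
    ∫⁻ y, F (‖y‖, ‖v + y‖) = ∫⁻ y, F (‖y‖, ‖w + y‖) := by
  set R := Submodule.reflection (ℝ ∙ (v - w))ᗮ
  rw [← R.measurePreserving.lintegral_comp_emb R.toHomeomorph.measurableEmbedding
    (fun y => F (‖y‖, ‖w + y‖))]
  refine lintegral_congr fun y => ?_
  rw [← Submodule.reflection_sub h, ← map_add, LinearIsometryEquiv.norm_map,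
    LinearIsometryEquiv.norm_map]

theorem lintegral_euclideanSpace_fin_three (H : ℝ × ℝ × ℝ → ℝ≥0∞) :
    ∫⁻ x : EuclideanSpace ℝ (Fin 3), H (x 0, x 1, x 2) = ∫⁻ p, H p := by
  let e := ((MeasurableEquiv.toLp 2 (Fin 3 → ℝ)).symm.trans
    (MeasurableEquiv.piFinSuccAbove (fun _ : Fin 3 => ℝ) 0)).trans
    ((MeasurableEquiv.refl ℝ).prodCongr (MeasurableEquiv.finTwoArrow))
  have he : MeasurePreserving e :=
    ((EuclideanSpace.volume_preserving_symm_measurableEquiv_toLp _).trans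
      (volume_preserving_piFinSuccAbove _ 0)).trans
      ((MeasurePreserving.id volume).prod (volume_preserving_finTwoArrow ℝ))
  exact he.lintegral_comp_emb e.measurableEmbedding H

theorem EuclideanSpace.norm_fin_three (x : EuclideanSpace ℝ (Fin 3)) :
    ‖x‖ = √(x 0 ^ 2 + (x 1 ^ 2 + x 2 ^ 2)) := by
  simp [EuclideanSpace.norm_eq, Fin.sum_univ_three, add_assoc]

theorem lintegral_comp_sq_add_sq (h : ℝ → ℝ≥0∞) (hh : Measurable h) :
    ∫⁻ w : ℝ × ℝ, h (w.1 ^ 2 + w.2 ^ 2)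
      = ENNReal.ofReal (2 * π) * ∫⁻ ρ in Ioi 0, ENNReal.ofReal ρ * h (ρ ^ 2) := by
  have hpolar (p : ℝ × ℝ) : (polarCoord.symm p).1 ^ 2 + (polarCoord.symm p).2 ^ 2 = p.1 ^ 2 := by
    rw [polarCoord_symm_apply]
    linear_combination p.1 ^ 2 * sin_sq_add_cos_sq p.2
  rw [← lintegral_comp_polarCoord_symm, polarCoord_target, Measure.volume_eq_prod,
    setLIntegral_prod _ (by fun_prop)]
  simp only [hpolar, smul_eq_mul, setLIntegral_const, volume_Ioo, sub_neg_eq_add, ← two_mul]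
  rw [lintegral_mul_const' _ _ ENNReal.ofReal_ne_top, mul_comm]

theorem lintegral_prod_comp_sq_add_sq (g : ℝ × ℝ → ℝ≥0∞) (hg : Measurable g) :
    ∫⁻ p : ℝ × ℝ × ℝ, g (p.1, p.2.1 ^ 2 + p.2.2 ^ 2)
      = ENNReal.ofReal (2 * π) * ∫⁻ q in univ ×ˢ Ioi 0, ENNReal.ofReal q.2 * g (q.1, q.2 ^ 2) := by
  rw [Measure.volume_eq_prod, lintegral_prod _ (by fun_prop), Measure.volume_eq_prod,
    setLIntegral_prod _ (by fun_prop), Measure.restrict_univ,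
    ← lintegral_const_mul' _ _ ENNReal.ofReal_ne_top]
  exact lintegral_congr fun z => lintegral_comp_sq_add_sq (fun σ => g (z, σ)) (by fun_prop)

def bipolarCoord (r : ℝ) (p : ℝ × ℝ) : ℝ × ℝ :=
  (√(p.1 ^ 2 + p.2 ^ 2), √((r + p.1) ^ 2 + p.2 ^ 2))

def bipolarTarget (r : ℝ) : Set (ℝ × ℝ) :=
  {q | 0 < q.1 ∧ |r - q.1| < q.2 ∧ q.2 < r + q.1}

def bipolarCoordDeriv (r : ℝ) (p : ℝ × ℝ) : ℝ × ℝ →L[ℝ] ℝ × ℝ :=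
  LinearMap.toContinuousLinearMap (Matrix.toLin (Module.Basis.finTwoProd ℝ)
    (Module.Basis.finTwoProd ℝ)
    !![p.1 / √(p.1 ^ 2 + p.2 ^ 2), p.2 / √(p.1 ^ 2 + p.2 ^ 2);
       (r + p.1) / √((r + p.1) ^ 2 + p.2 ^ 2), p.2 / √((r + p.1) ^ 2 + p.2 ^ 2)])

theorem hasFDerivAt_bipolarCoord (r : ℝ) {p : ℝ × ℝ} (h₁ : p.1 ^ 2 + p.2 ^ 2 ≠ 0)
    (h₂ : (r + p.1) ^ 2 + p.2 ^ 2 ≠ 0) :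
    HasFDerivAt (bipolarCoord r) (bipolarCoordDeriv r p) p := by
  have hs := (((hasFDerivAt_fst (𝕜 := ℝ) (p := p)).pow 2).add
    ((hasFDerivAt_snd (𝕜 := ℝ) (p := p)).pow 2)).sqrt h₁
  have ht := ((((hasFDerivAt_fst (𝕜 := ℝ) (p := p)).const_add r).pow 2).add
    ((hasFDerivAt_snd (𝕜 := ℝ) (p := p)).pow 2)).sqrt h₂
  refine (hs.prodMk ht).congr_fderiv ?_
  rw [bipolarCoordDeriv, Matrix.toLin_finTwoProd_toContinuousLinearMap]
  ext <;> simp <;> field_simp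

theorem det_bipolarCoordDeriv (r : ℝ) {p : ℝ × ℝ} (h₁ : p.1 ^ 2 + p.2 ^ 2 ≠ 0)
    (h₂ : (r + p.1) ^ 2 + p.2 ^ 2 ≠ 0) :
    (bipolarCoordDeriv r p).det
      = -(r * p.2) / (√(p.1 ^ 2 + p.2 ^ 2) * √((r + p.1) ^ 2 + p.2 ^ 2)) := by
  have : √(p.1 ^ 2 + p.2 ^ 2) ≠ 0 := by positivity
  have : √((r + p.1) ^ 2 + p.2 ^ 2) ≠ 0 := by positivity
  simp only [bipolarCoordDeriv, LinearMap.det_toContinuousLinearMap, LinearMap.det_toLin,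
    Matrix.det_fin_two_of]
  field_simp
  ring

theorem injOn_bipolarCoord {r : ℝ} (hr : r ≠ 0) : InjOn (bipolarCoord r) (univ ×ˢ Ioi 0) := by
  rintro p ⟨-, hp⟩ q ⟨-, hq⟩ hpq
  simp only [bipolarCoord, Prod.mk.injEq] at hpq
  rw [sqrt_inj (by positivity) (by positivity), sqrt_inj (by positivity) (by positivity)] at hpq
  have h₁ : p.1 = q.1 :=
    mul_left_cancel₀ (mul_ne_zero two_ne_zero hr) (by linear_combination hpq.2 - hpq.1)
  have h₂ : p.2 = q.2 :=
    (pow_left_inj₀ hp.le hq.le two_ne_zero).1 (by rw [h₁] at hpq; linarith [hpq.1])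
  exact Prod.ext h₁ h₂

theorem mapsTo_bipolarCoord {r : ℝ} (hr : 0 < r) :
    MapsTo (bipolarCoord r) (univ ×ˢ Ioi 0) (bipolarTarget r) := by
  rintro ⟨z, ρ⟩ ⟨-, hρ : 0 < ρ⟩
  set s := √(z ^ 2 + ρ ^ 2)
  have hs : s ^ 2 = z ^ 2 + ρ ^ 2 := sq_sqrt (by positivity)
  have hzs : |z| < s := by
    rw [← sqrt_sq_eq_abs]
    exact sqrt_lt_sqrt (sq_nonneg z) (by linarith [sq_pos_of_pos hρ])
  obtain ⟨hzs₁, hzs₂⟩ := abs_lt.1 hzs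
  refine ⟨(abs_nonneg z).trans_lt hzs, ?_, ?_⟩ <;> dsimp only [bipolarCoord]
  · rw [lt_sqrt (abs_nonneg _), sq_abs]
    nlinarith
  · rw [sqrt_lt' (by linarith)]
    nlinarith

theorem surjOn_bipolarCoord {r : ℝ} (hr : 0 < r) :
    SurjOn (bipolarCoord r) (univ ×ˢ Ioi 0) (bipolarTarget r) := by
  rintro ⟨s, t⟩ ⟨hs, hst, hts⟩
  dsimp only at hs hst hts
  obtain ⟨hst₁, hst₂⟩ := abs_sub_lt_iff.1 hst
  -- `z` is read off from `t² = (r + z)² + (s² - z²)`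
  set z := (t ^ 2 - s ^ 2 - r ^ 2) / (2 * r)
  -- Heron: `4 r² (s² - z²) = ((r + s)² - t²) (t² - (r - s)²)`
  have hz : z ^ 2 < s ^ 2 := by
    rw [div_pow, div_lt_iff₀ (by positivity)]
    nlinarith [mul_pos (mul_pos (sub_pos.2 hts) (by linarith : 0 < r + s + t))
      (mul_pos (by linarith : 0 < t - s + r) (by linarith : 0 < t + s - r))]
  have hρ : √(s ^ 2 - z ^ 2) ^ 2 = s ^ 2 - z ^ 2 := sq_sqrt (by linarith)
  refine ⟨(z, √(s ^ 2 - z ^ 2)), ⟨mem_univ _, sqrt_pos.2 (by linarith)⟩, ?_⟩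
  simp only [bipolarCoord, hρ, Prod.mk.injEq]
  constructor
  · rw [show z ^ 2 + (s ^ 2 - z ^ 2) = s ^ 2 by ring, sqrt_sq hs.le]
  · rw [show (r + z) ^ 2 + (s ^ 2 - z ^ 2) = t ^ 2 by simp only [z]; field_simp; ring,
      sqrt_sq (by linarith)]

theorem measurableSet_bipolarTarget (r : ℝ) : MeasurableSet (bipolarTarget r) := by
  unfold bipolarTarget
  measurability

theorem lintegral_comp_bipolarCoord {r : ℝ} (hr : 0 < r) (F : ℝ × ℝ → ℝ≥0∞) :
    ∫⁻ p in univ ×ˢ Ioi 0, ENNReal.ofReal p.2 * F (bipolarCoord r p)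
      = ∫⁻ q in bipolarTarget r, ENNReal.ofReal (q.1 * q.2 / r) * F q := by
  have hV : MeasurableSet (univ ×ˢ Ioi 0 : Set (ℝ × ℝ)) := MeasurableSet.univ.prod measurableSet_Ioi
  have hradicands {p : ℝ × ℝ} (hp : p ∈ univ ×ˢ Ioi 0) :
      0 < p.1 ^ 2 + p.2 ^ 2 ∧ 0 < (r + p.1) ^ 2 + p.2 ^ 2 := by
    have : 0 < p.2 := hp.2
    constructor <;> positivity
  rw [← (surjOn_bipolarCoord hr).image_eq_of_mapsTo (mapsTo_bipolarCoord hr),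
    lintegral_image_eq_lintegral_abs_det_fderiv_mul volume hV
      (fun p hp => (hasFDerivAt_bipolarCoord r (hradicands hp).1.ne'
        (hradicands hp).2.ne').hasFDerivWithinAt) (injOn_bipolarCoord hr.ne')]
  refine setLIntegral_congr_fun hV fun p hp => ?_
  obtain ⟨h₁, h₂⟩ := hradicands hp
  have hρ : 0 < p.2 := hp.2
  rw [det_bipolarCoordDeriv r h₁.ne' h₂.ne', ← mul_assoc, ← ENNReal.ofReal_mul (abs_nonneg _)]
  congr 2
  simp only [bipolarCoord]
  rw [abs_div, abs_neg, abs_of_pos (by positivity), abs_of_pos (by positivity)]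
  field_simp

theorem setLIntegral_bipolarTarget (r : ℝ) {f : ℝ × ℝ → ℝ≥0∞} (hf : Measurable f) :
    ∫⁻ q in bipolarTarget r, f q = ∫⁻ s in Ioi 0, ∫⁻ t in Ioo |r - s| (r + s), f (s, t) := by
  rw [← lintegral_indicator (measurableSet_bipolarTarget r), Measure.volume_eq_prod,
    lintegral_prod _ ((hf.indicator (measurableSet_bipolarTarget r)).aemeasurable),
    ← lintegral_indicator measurableSet_Ioi]
  refine lintegral_congr fun s => ?_
  by_cases hs : 0 < s
  · rw [indicator_of_mem (mem_Ioi.2 hs), ← lintegral_indicator measurableSet_Ioo]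
    simp [bipolarTarget, indicator_apply, hs]
  · rw [indicator_of_notMem (notMem_Ioi.2 (not_lt.1 hs))]
    simp [bipolarTarget, hs]

theorem lintegral_comp_norm_norm_smul_add_fin_three {r : ℝ} (hr : 0 < r)
    {u : EuclideanSpace ℝ (Fin 3)} (hu : ‖u‖ = 1) {F : ℝ × ℝ → ℝ≥0∞} (hF : Measurable F) :
    ∫⁻ y, F (‖y‖, ‖r • u + y‖) = ENNReal.ofReal (2 * π) *
      ∫⁻ s in Ioi 0, ∫⁻ t in Ioo |r - s| (r + s), ENNReal.ofReal (s * t / r) * F (s, t) := by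
  calc ∫⁻ y, F (‖y‖, ‖r • u + y‖)
      = ∫⁻ y : EuclideanSpace ℝ (Fin 3), F (‖y‖, ‖EuclideanSpace.single 0 r + y‖) :=
        lintegral_comp_norm_norm_add_of_norm_eq F (by simp [norm_smul, hu, abs_of_pos hr])
    _ = ∫⁻ p : ℝ × ℝ × ℝ, F (√(p.1 ^ 2 + (p.2.1 ^ 2 + p.2.2 ^ 2)),
          √((r + p.1) ^ 2 + (p.2.1 ^ 2 + p.2.2 ^ 2))) := by
        rw [← lintegral_euclideanSpace_fin_three]
        simp [EuclideanSpace.norm_fin_three]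
    _ = ENNReal.ofReal (2 * π) *
          ∫⁻ p in univ ×ˢ Ioi 0, ENNReal.ofReal p.2 * F (bipolarCoord r p) :=
        lintegral_prod_comp_sq_add_sq (fun q => F (√(q.1 ^ 2 + q.2), √((r + q.1) ^ 2 + q.2)))
          (by fun_prop)
    _ = _ := by
        rw [lintegral_comp_bipolarCoord hr, setLIntegral_bipolarTarget r (by fun_prop)]

theorem integral_exp_neg_mul (c l u : ℝ) (hc : c ≠ 0) :
    ∫ t in l..u, exp (-(c * t)) = (exp (-(c * l)) - exp (-(c * u))) / c := by
  simp only [← neg_mul, intervalIntegral.integral_comp_mul_left (fun t => exp t) (neg_ne_zero.2 hc),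
    integral_exp, smul_eq_mul]
  field_simp
  ring

theorem lintegral_exp_neg_mul_Ioo {c l u : ℝ} (hc : 0 < c) (hlu : l ≤ u) :
    ∫⁻ t in Ioo l u, ENNReal.ofReal (exp (-(c * t)))
      = ENNReal.ofReal ((exp (-(c * l)) - exp (-(c * u))) / c) := by
  have hcont : Continuous fun t => exp (-(c * t)) := by fun_prop
  rw [← ofReal_integral_eq_lintegral_ofReal (hcont.integrableOn_Icc.mono_set Ioo_subset_Icc_self)
    (ae_of_all _ fun t => (exp_pos _).le), ← integral_Ioc_eq_integral_Ioo,
    ← intervalIntegral.integral_of_le hlu, integral_exp_neg_mul c l u hc.ne']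

theorem exp_neg_mul_sub_exp_neg_mul_le {b c x : ℝ} (hb : 0 ≤ b) (hbc : b ≤ c) (hx : 0 ≤ x) :
    exp (-(b * x)) - exp (-(c * x)) ≤ (c - b) * x := by
  have h₁ : exp (-(b * x)) ≤ 1 := exp_le_one_iff.2 (by nlinarith)
  have h₂ : 1 - (c - b) * x ≤ exp (-((c - b) * x)) := by linarith [add_one_le_exp (-((c - b) * x))]
  have h₃ : exp (-(c * x)) = exp (-(b * x)) * exp (-((c - b) * x)) := by rw [← exp_add]; ring_nf
  have h₄ : 0 ≤ (c - b) * x := mul_nonneg (sub_nonneg.2 hbc) hx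
  nlinarith [exp_pos (-(b * x))]

theorem integrableOn_exp_neg_mul_sub_exp_neg_mul_div {b c : ℝ} (hb : 0 ≤ b) (hbc : b ≤ c) (r : ℝ) :
    IntegrableOn (fun x => (exp (-(b * x)) - exp (-(c * x))) / x) (Ioo 0 r) := by
  have hmeas : Measurable fun x => (exp (-(b * x)) - exp (-(c * x))) / x := by fun_prop
  refine Measure.integrableOn_of_bounded (M := c - b) (by simp [volume_Ioo])
    hmeas.aestronglyMeasurable
    ((ae_restrict_iff' measurableSet_Ioo).2 (ae_of_all _ fun x hx => ?_))
  have hx : 0 < x := hx.1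
  have hnum : 0 ≤ exp (-(b * x)) - exp (-(c * x)) := sub_nonneg.2 (exp_le_exp.2 (by nlinarith))
  rw [norm_of_nonneg (div_nonneg hnum hx.le), div_le_iff₀ hx]
  exact exp_neg_mul_sub_exp_neg_mul_le hb hbc hx.le

theorem integrableOn_exp_neg_mul_div_Ioi {b r : ℝ} (hb : 0 < b) (hr : 0 < r) :
    IntegrableOn (fun x => exp (-(b * x)) / x) (Ioi r) := by
  have hmeas : Measurable fun x => exp (-(b * x)) / x := by fun_prop
  refine ((exp_neg_integrableOn_Ioi r hb).mul_const r⁻¹).mono' hmeas.aestronglyMeasurable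
    ((ae_restrict_iff' measurableSet_Ioi).2 (ae_of_all _ fun x (hx : r < x) => ?_))
  rw [norm_of_nonneg (div_nonneg (exp_pos _).le (hr.trans hx).le), neg_mul]
  exact div_le_div_of_nonneg_left (exp_pos _).le hr hx.le

/-- `2π · shellDensity a m r s` is the integral of `e^{-m |r u + y| - a |y|} / (|r u + y| |y|²)`
over the sphere `|y| = s`. -/
def shellDensity (a m r s : ℝ) : ℝ :=
  exp (-(a * s)) * (exp (-(m * |r - s|)) - exp (-(m * (r + s)))) / (m * r * s)

theorem shellDensity_nonneg {a m r s : ℝ} (hm : 0 < m) (hr : 0 < r) (hs : 0 < s) :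
    0 ≤ shellDensity a m r s := by
  have hrs : m * |r - s| ≤ m * (r + s) :=
    mul_le_mul_of_nonneg_left (abs_sub_le_iff.2 ⟨by linarith, by linarith⟩) hm.le
  have := sub_nonneg.2 (exp_le_exp.2 (neg_le_neg hrs))
  unfold shellDensity
  positivity

theorem shellDensity_of_lt {a m r s : ℝ} (hsr : s < r) :
    shellDensity a m r s
      = exp (-(m * r)) / (m * r) * ((exp (-((a - m) * s)) - exp (-((a + m) * s))) / s) := by
  rw [shellDensity, abs_of_pos (sub_pos.2 hsr)]
  simp only [div_mul_div_comm, mul_sub, ← exp_add]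
  ring_nf

theorem shellDensity_of_le {a m r s : ℝ} (hrs : r ≤ s) :
    shellDensity a m r s
      = (exp (m * r) - exp (-(m * r))) / (m * r) * (exp (-((a + m) * s)) / s) := by
  rw [shellDensity, abs_of_nonpos (sub_nonpos.2 hrs)]
  simp only [div_mul_div_comm, mul_sub, sub_mul, ← exp_add]
  ring_nf

theorem lintegral_Ioo_eq_shellDensity {a m r s : ℝ} (hm : 0 < m) (hr : 0 < r) (hs : 0 < s) :
    ∫⁻ t in Ioo |r - s| (r + s), ENNReal.ofReal (s * t / r) *
        ENNReal.ofReal (exp (-(m * t) - a * s) / (t * s ^ 2))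
      = ENNReal.ofReal (shellDensity a m r s) := by
  calc _ = ∫⁻ t in Ioo |r - s| (r + s),
          ENNReal.ofReal (exp (-(a * s)) / (r * s)) * ENNReal.ofReal (exp (-(m * t))) := by
        refine setLIntegral_congr_fun measurableSet_Ioo fun t ht => ?_
        have : 0 < t := (abs_nonneg _).trans_lt ht.1
        rw [← ENNReal.ofReal_mul (by positivity), ← ENNReal.ofReal_mul (by positivity),
          sub_eq_add_neg, exp_add]
        congr 1
        field_simp
    _ = _ := by
        rw [lintegral_const_mul' _ _ ENNReal.ofReal_ne_top,
          lintegral_exp_neg_mul_Ioo hm (abs_sub_le_iff.2 ⟨by linarith, by linarith⟩),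
          ← ENNReal.ofReal_mul (by positivity), shellDensity]
        congr 1
        field_simp

theorem integrableOn_shellDensity_Ioo {a m r : ℝ} (ha : m ≤ a) (hm : 0 ≤ m) :
    IntegrableOn (shellDensity a m r) (Ioo 0 r) :=
  IntegrableOn.congr_fun
    ((integrableOn_exp_neg_mul_sub_exp_neg_mul_div (sub_nonneg.2 ha) (by linarith) r).const_mul _)
    (fun _ hs => (shellDensity_of_lt hs.2).symm) measurableSet_Ioo

theorem integrableOn_shellDensity_Ici {a m r : ℝ} (ha : 0 < a + m) (hr : 0 < r) :
    IntegrableOn (shellDensity a m r) (Ici r) :=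
  IntegrableOn.congr_fun
    ((integrableOn_Ici_iff_integrableOn_Ioi).2
      ((integrableOn_exp_neg_mul_div_Ioi ha hr).const_mul _))
    (fun _ hs => (shellDensity_of_le hs).symm) measurableSet_Ici

theorem integrableOn_shellDensity {a m r : ℝ} (hm : 0 < m) (ha : m ≤ a) (hr : 0 < r) :
    IntegrableOn (shellDensity a m r) (Ioi 0) :=
  Ioo_union_Ici_eq_Ioi hr ▸
    (integrableOn_shellDensity_Ioo ha hm.le).union (integrableOn_shellDensity_Ici (by linarith) hr)

theorem integral_shellDensity {a m r : ℝ} (hm : 0 < m) (ha : m ≤ a) (hr : 0 < r) :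
    ∫ s in Ioi 0, shellDensity a m r s
      = exp (-(m * r)) / (m * r) *
          (∫ x in 0..r, (exp (-((a - m) * x)) - exp (-((a + m) * x))) / x)
        + (exp (m * r) - exp (-(m * r))) / (m * r) * ∫ x in Ioi r, exp (-((a + m) * x)) / x := by
  rw [← Ioo_union_Ici_eq_Ioi hr,
    setIntegral_union ((Iio_disjoint_Ici le_rfl).mono_left Ioo_subset_Iio_self) measurableSet_Ici
    (integrableOn_shellDensity_Ioo ha hm.le) (integrableOn_shellDensity_Ici (by linarith) hr),
    setIntegral_congr_fun measurableSet_Ioo fun _ hs => shellDensity_of_lt hs.2,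
    setIntegral_congr_fun measurableSet_Ici fun _ hs => shellDensity_of_le hs,
    integral_const_mul, integral_const_mul, integral_Ici_eq_integral_Ioi,
    intervalIntegral.integral_of_le hr.le, integral_Ioc_eq_integral_Ioo]

theorem integrable_and_integral_eq_of_lintegral_ofReal_eq {α : Type*} [MeasurableSpace α]
    {μ : Measure α} {f : α → ℝ} {c : ℝ} (hfm : AEStronglyMeasurable f μ) (hf : 0 ≤ᵐ[μ] f)
    (hc : 0 ≤ c) (h : ∫⁻ x, ENNReal.ofReal (f x) ∂μ = ENNReal.ofReal c) :
    Integrable f μ ∧ ∫ x, f x ∂μ = c :=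
  ⟨⟨hfm, by rw [hasFiniteIntegral_iff_ofReal hf, h]; exact ENNReal.ofReal_lt_top⟩,
    by rw [integral_eq_lintegral_of_nonneg_ae hf hfm, h, ENNReal.toReal_ofReal hc]⟩

/-- The inner coordinate-space integration arising in the evaluation of the three-loop
vacuum diagram C (with `a = m₃ + m₄`). -/
theorem diagramC_inner_integral (a m₅ r : ℝ) (hm₅ : 0 < m₅) (ha : m₅ < a) (hr : 0 < r)
    (u : EuclideanSpace ℝ (Fin 3)) (hu : ‖u‖ = 1) :
    Integrable (fun y : EuclideanSpace ℝ (Fin 3) =>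
      Real.exp (-(m₅ * ‖r • u + y‖) - a * ‖y‖) / (‖r • u + y‖ * ‖y‖ ^ 2)) ∧
    ∫ y : EuclideanSpace ℝ (Fin 3),
        Real.exp (-(m₅ * ‖r • u + y‖) - a * ‖y‖) / (‖r • u + y‖ * ‖y‖ ^ 2)
      = (2 * π / (m₅ * r)) *
        (Real.exp (-(m₅ * r)) *
            (∫ x in (0 : ℝ)..r,
              (Real.exp (-((a - m₅) * x)) - Real.exp (-((a + m₅) * x))) / x) +
          (Real.exp (m₅ * r) - Real.exp (-(m₅ * r))) *
            ∫ x in Set.Ioi r, Real.exp (-((a + m₅) * x)) / x) := by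
  set F : ℝ × ℝ → ℝ≥0∞ := fun q => ENNReal.ofReal (exp (-(m₅ * q.2) - a * q.1) / (q.2 * q.1 ^ 2))
  have hlintegral : ∫⁻ y, F (‖y‖, ‖r • u + y‖)
      = ENNReal.ofReal (2 * π * ∫ s in Ioi 0, shellDensity a m₅ r s) := by
    rw [lintegral_comp_norm_norm_smul_add_fin_three hr hu (by fun_prop),
      setLIntegral_congr_fun measurableSet_Ioi fun s hs => lintegral_Ioo_eq_shellDensity hm₅ hr hs,
      ← ofReal_integral_eq_lintegral_ofReal (integrableOn_shellDensity hm₅ ha.le hr)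
        ((ae_restrict_iff' measurableSet_Ioi).2
          (ae_of_all _ fun s hs => shellDensity_nonneg hm₅ hr hs)),
      ← ENNReal.ofReal_mul (by positivity)]
  obtain ⟨hint, hintegral⟩ := integrable_and_integral_eq_of_lintegral_ofReal_eq
    (by fun_prop : Measurable _).aestronglyMeasurable (ae_of_all _ fun y => by positivity)
    (mul_nonneg (by positivity)
      (setIntegral_nonneg measurableSet_Ioi fun s hs => shellDensity_nonneg hm₅ hr hs))
    hlintegral
  refine ⟨hint, hintegral.trans ?_⟩
  rw [integral_shellDensity hm₅ ha.le hr]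
  ring

end
end
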